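/- Assume the continuum hypothesis 2^{ℵ₀} = ℵ₁. Let T ⊆ S^{ω₂}_{ω₁} be stationary in ω₂. Then T → (ω₂-stationary, ω₁)²: for every coloring d : [T]² → {0,1}, either there exists a set X ⊆ T of order type ω₁ such that d is constantly 1 on [X]², or there exists a stationary set S ⊆ T such that d is constantly 0 on [S]². -/

import Mathlib

noncomputable def omega1 : Ordinal := (Cardinal.aleph 1).ord
noncomputable def omega2 : Ordinal := (Cardinal.aleph 2).ord

/-- `C` is a club in `κ`: a subset of `κ` that is unbounded in `κ` and closed,
i.e. it contains every limit ordinal `δ < κ` in which `C ∩ δ` is unbounded. -/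
def IsClubIn (C : Set Ordinal) (κ : Ordinal) : Prop :=
  C ⊆ Set.Iio κ ∧
  (∀ α < κ, ∃ β ∈ C, α < β) ∧
  (∀ δ < κ, Order.IsSuccLimit δ → (∀ α < δ, ∃ β ∈ C, α < β ∧ β < δ) → δ ∈ C)

/-- `S` is stationary in `κ`: it meets every club subset of `κ`. -/
def IsStationaryIn (S : Set Ordinal) (κ : Ordinal) : Prop :=
  ∀ C : Set Ordinal, IsClubIn C κ → (S ∩ C).Nonempty

/-- `S^{ω₂}_{ω₁}`: the set of ordinals below `ω₂` of cofinality `ω₁`. -/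
noncomputable def Somega2omega1 : Set Ordinal :=
  {δ : Ordinal | δ < omega2 ∧ δ.cof = Cardinal.aleph 1}

/-!
Suppose no `1`-homogeneous subset of `T` has order type `ω₁`; then every `1`-homogeneous subset
of `T` is countable. For `δ ∈ T` choose a maximal `A δ ⊆ T ∩ δ` such that `A δ ∪ {δ}` is
`1`-homogeneous. It is countable, hence bounded below `δ` because `cf δ = ω₁`, and by Fodor's
lemma the bound is at most a fixed `γ < ω₂` on a stationary set. Under CH there are only
`ℵ₁ ^ ℵ₀ = ℵ₁` countable subsets of `γ`, so `A` is constant on a stationary `S ⊆ T`. If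
`δ < δ'` lie in `S` and `d δ δ' = 1`, then `δ` could be added to `A δ' = A δ`, contradicting
maximality; so `S` is `0`-homogeneous.
-/

open Cardinal Ordinal Set Order

universe u v

theorem Ordinal.isSuccLimit_of_forall_exists_between {δ : Ordinal} (hδ : 0 < δ)
    (h : ∀ α < δ, ∃ β, α < β ∧ β < δ) : IsSuccLimit δ := by
  refine isSuccLimit_iff.2 ⟨hδ.ne', fun α hα => ?_⟩
  obtain ⟨β, hαβ, hβδ⟩ := h α hα.lt
  exact hα.2 hαβ hβδ

theorem Ordinal.exists_gt_apply_lt_nfp {g : Ordinal.{u} → Ordinal.{u}} (hg : ∀ β, β < g β)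
    {a ε : Ordinal.{u}} (hε : ε < nfp g a) : ∃ y, ε < y ∧ g y < nfp g a := by
  obtain ⟨n, hn⟩ := lt_nfp_iff.1 hε
  refine ⟨g^[n] a, hn, ?_⟩
  calc g (g^[n] a) < g (g (g^[n] a)) := hg _
    _ = g^[n + 2] a := by rw [Function.iterate_succ_apply', Function.iterate_succ_apply']
    _ ≤ nfp g a := iterate_le_nfp g a _

theorem Ordinal.sSup_lt_of_countable {s : Set Ordinal.{u}} {δ : Ordinal.{u}} (hs : s.Countable)
    (hδ : ℵ₀ < δ.cof) (h : ∀ x ∈ s, x < δ) : sSup s < δ := by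
  refine sSup_lt_of_lt_cof ?_ h
  rw [← lift_cof]
  exact hs.le_aleph0.trans_lt (aleph0_lt_lift.2 hδ)

theorem Ordinal.exists_strictMonoOn_Iio_ord {X : Set Ordinal.{u}} {c : Cardinal.{v}}
    (hX : Cardinal.lift.{u + 1} c ≤ Cardinal.lift.{v} #X) :
    ∃ f : Ordinal.{v} → Ordinal.{u}, StrictMonoOn f (Iio c.ord) ∧ ∀ i < c.ord, f i ∈ X := by
  obtain ⟨e⟩ : Nonempty (c.ord.ToType ≤i X) := by
    rw [← lift_type_le.{v, u + 1, 0}, type_toType, lift_ord, ord_le, ← Ordinal.lift_card,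
      card_type]
    exact hX
  refine ⟨fun i => if h : i < c.ord then e (ToType.mk ⟨i, h⟩) else 0, fun i hi j hj hij => ?_,
    fun i hi => ?_⟩
  · simp only [dif_pos (show i < c.ord from hi), dif_pos (show j < c.ord from hj)]
    exact e.strictMono (ToType.mk.strictMono (Subtype.mk_lt_mk.2 hij))
  · simp only [dif_pos hi]
    exact Subtype.coe_prop _

theorem Cardinal.continuum_eq_aleph_one_of_univ (h : continuum.{v} = ℵ₁) :
    continuum.{u} = ℵ₁ :=
  lift_eq_aleph_one.{u, v}.1 (by simpa using congrArg Cardinal.lift.{u} h)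

theorem Cardinal.isRegular_aleph_two : (ℵ_ 2 : Cardinal.{u}).IsRegular :=
  one_add_one_eq_two (R := Ordinal) ▸ isRegular_aleph_add_one 1

theorem card_le_aleph_one_of_lt_omega2 {o : Ordinal.{u}} (h : o < omega2) : o.card ≤ ℵ₁ := by
  have := lt_ord.1 h
  rwa [← one_add_one_eq_two, ← succ_aleph, Order.lt_succ_iff] at this

theorem mk_countable_subsets_Iic_le (hCH : continuum.{u + 1} = ℵ₁) {γ : Ordinal.{u}}
    (hγ : γ < omega2) : #{t : Set Ordinal.{u} // t ⊆ Iic γ ∧ #t ≤ ℵ₀} ≤ ℵ₁ := by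
  have hIic : #(Iic γ) ≤ ℵ₁ := by
    rw [← Order.Iio_succ, Cardinal.mk_Iio_ordinal, lift_le_aleph_one]
    exact card_le_aleph_one_of_lt_omega2 ((isSuccLimit_ord (aleph0_le_aleph 2)).succ_lt hγ)
  calc _ ≤ max #(Iic γ) ℵ₀ ^ ℵ₀ := mk_bounded_subset_le _ _
    _ ≤ continuum ^ ℵ₀ := by
        refine power_le_power_right ?_
        rw [hCH]
        exact max_le hIic aleph0_lt_aleph_one.le
    _ = ℵ₁ := by rw [continuum_power_aleph0, hCH]

section Stationary

variable {κ : Ordinal.{u}}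

theorem IsClubIn.isClub_preimage {C : Set Ordinal.{u}} (hC : IsClubIn C κ) :
    IsClub (Subtype.val ⁻¹' C : Set (Iio κ)) := by
  refine ⟨dirSupClosed_iff_of_linearOrder.2 fun d hdC ⟨x, hx⟩ a ha => ?_, fun x => ?_⟩
  · by_cases had : a ∈ d
    · exact hdC had
    have hbetween : ∀ α < (a : Ordinal), ∃ β ∈ C, α < β ∧ β < a := by
      intro α hα
      have : ¬ (⟨α, hα.trans a.2⟩ : Iio κ) ∈ upperBounds d := fun hub => (ha.2 hub).not_gt hα
      obtain ⟨y, hy, hαy⟩ := not_forall₂.1 this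
      exact ⟨y, hdC hy, not_le.1 hαy, lt_of_le_of_ne (ha.1 hy) fun h => had (Subtype.ext h ▸ hy)⟩
    have hxa : (x : Ordinal) < a := lt_of_le_of_ne (ha.1 hx) fun h => had (Subtype.ext h ▸ hx)
    refine hC.2.2 a a.2 (isSuccLimit_of_forall_exists_between hxa.pos fun α hα => ?_) hbetween
    obtain ⟨β, -, hβ⟩ := hbetween α hα
    exact ⟨β, hβ⟩
  · obtain ⟨β, hβC, hxβ⟩ := hC.2.1 x x.2
    exact ⟨⟨β, hC.1 hβC⟩, hβC, hxβ.le⟩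

theorem IsClub.isClubIn_image (hκ : IsSuccLimit κ) {D : Set (Iio κ)} (hD : IsClub D) :
    IsClubIn (Subtype.val '' D) κ := by
  refine ⟨by rintro _ ⟨x, -, rfl⟩; exact x.2, fun α hα => ?_, fun δ hδ hlim h => ?_⟩
  · obtain ⟨y, hyD, hy⟩ := hD.isCofinal ⟨α + 1, hκ.add_one_lt hα⟩
    exact ⟨y, mem_image_of_mem _ hyD, (lt_add_one α).trans_le hy⟩
  · have hlub : IsLUB {x ∈ D | (x : Ordinal) < δ} (⟨δ, hδ⟩ : Iio κ) := by
      refine ⟨fun x hx => hx.2.le, fun b hb => not_lt.1 fun hbδ => ?_⟩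
      obtain ⟨_, ⟨y, hyD, rfl⟩, hby, hyδ⟩ := h b hbδ
      exact (hb ⟨hyD, hyδ⟩).not_gt hby
    obtain ⟨_, ⟨y, hyD, rfl⟩, -, hyδ⟩ := h 0 hlim.bot_lt
    exact ⟨_, dirSupClosed_iff_of_linearOrder.1 hD.dirSupClosed
      (fun x (hx : x ∈ {x ∈ D | (x : Ordinal) < δ}) => hx.1) ⟨y, hyD, hyδ⟩ hlub, rfl⟩

theorem isStationaryIn_iff_isStationary (hκ : IsSuccLimit κ) {S : Set Ordinal.{u}} :
    IsStationaryIn S κ ↔ IsStationary (Subtype.val ⁻¹' S : Set (Iio κ)) := by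
  refine ⟨fun hS D hD => ?_, fun hS C hC => ?_⟩
  · obtain ⟨_, hxS, x, hxD, rfl⟩ := hS _ (hD.isClubIn_image hκ)
    exact ⟨x, hxS, hxD⟩
  · obtain ⟨x, hxS, hxC⟩ := hS hC.isClub_preimage
    exact ⟨x, hxS, hxC⟩

theorem IsStationaryIn.exists_isStationaryIn_fiber {β : Type v} (hκ : ℵ₀ < κ.cof)
    {S : Set Ordinal.{u}} (hS : IsStationaryIn S κ) (F : Ordinal.{u} → β)
    (hF : Cardinal.lift.{u} #(F '' S) < Cardinal.lift.{v} κ.cof) :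
    ∃ b, IsStationaryIn {δ ∈ S | F δ = b} κ := by
  have hlim : IsSuccLimit κ := one_lt_cof_iff.1 (one_lt_aleph0.trans hκ)
  have hcof : Order.cof (Iio κ) = Cardinal.lift.{u + 1} κ.cof := by rw [cof_Iio, ← lift_cof]
  simp only [isStationaryIn_iff_isStationary hlim] at hS ⊢
  have hcover : (Subtype.val ⁻¹' S : Set (Iio κ)) =
      ⋃ b : F '' S, Subtype.val ⁻¹' {δ ∈ S | F δ = b} := by
    ext x
    simp only [mem_preimage, mem_iUnion]
    exact ⟨fun h => ⟨⟨F x, x, h, rfl⟩, h, rfl⟩, fun ⟨_, h, _⟩ => h⟩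
  rw [hcover, isStationary_iUnion_iff (by rw [hcof, Ne, lift_eq_aleph0]; exact hκ.ne')] at hS
  · obtain ⟨b, hb⟩ := hS
    exact ⟨b, hb⟩
  · rw [hcof]
    simpa only [Cardinal.lift_lift, Cardinal.lift_umax] using
      Cardinal.lift_lt.{max u v, u + 1}.2 hF

def diagInter (κ : Ordinal) (D : Ordinal → Set Ordinal) : Set Ordinal :=
  {δ | δ < κ ∧ ∀ γ < δ, δ ∈ D γ}

variable {c : Cardinal.{u}}

theorem isClubIn_diagInter (hc : c.IsRegular) (hc₀ : ℵ₀ < c) {D : Ordinal.{u} → Set Ordinal.{u}}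
    (hD : ∀ γ < c.ord, IsClubIn (D γ) c.ord) : IsClubIn (diagInter c.ord D) c.ord := by
  refine ⟨fun δ hδ => hδ.1, fun α hα => ?_, fun δ hδ hlim h => ⟨hδ, fun γ hγ => ?_⟩⟩
  · have hnext : ∀ γ β, ∃ x, β < x ∧ (γ < c.ord → β < c.ord → x ∈ D γ) := by
      intro γ β
      by_cases h : γ < c.ord ∧ β < c.ord
      · obtain ⟨x, hx, hβx⟩ := (hD γ h.1).2.1 β h.2
        exact ⟨x, hβx, fun _ _ => hx⟩
      · exact ⟨β + 1, lt_add_one β, fun h₁ h₂ => absurd ⟨h₁, h₂⟩ h⟩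
    choose next hnext using hnext
    -- `g β` bounds the next element above `β` of every `D γ` with `γ ≤ β`; the limit of the
    -- iterates of `g` from `α` then lies in every `D γ` below it.
    let g : Ordinal.{u} → Ordinal.{u} := fun β => ⨆ γ : Iio (β + 1), next γ β
    have hg_ge : ∀ β, ∀ γ ≤ β, next γ β ≤ g β := fun β γ hγ =>
      le_ciSup Ordinal.bddAbove_of_small (⟨γ, Order.lt_add_one_iff.2 hγ⟩ : Iio (β + 1))
    have hg : ∀ β, β < g β := fun β => (hnext β β).1.trans_le (hg_ge β β le_rfl)
    have hg_lt : ∀ β < c.ord, g β < c.ord := by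
      intro β hβ
      have hβ₁ : β + 1 < c.ord := (isSuccLimit_ord hc₀.le).add_one_lt hβ
      refine lift_iSup_lt_of_lt_cof ?_ fun γ =>
        (hD γ (γ.2.trans hβ₁)).1 ((hnext γ β).2 (γ.2.trans hβ₁) hβ)
      rw [Cardinal.mk_Iio_ordinal, ← lift_cof, hc.cof_ord]
      simpa only [Cardinal.lift_lift, Cardinal.lift_lt] using lt_ord.1 hβ₁
    have hlt : nfp g α < c.ord := nfp_lt_ord_of_isRegular hc hc₀.ne' hg_lt hα
    refine ⟨nfp g α, ⟨hlt, fun γ hγ => ?_⟩, (hg α).trans_le (iterate_le_nfp g α 1)⟩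
    have hbetween : ∀ ε < nfp g α, ∃ β ∈ D γ, ε < β ∧ β < nfp g α := by
      intro ε hε
      obtain ⟨y, hy, hgy⟩ := exists_gt_apply_lt_nfp hg (max_lt hγ hε)
      obtain ⟨hγy, hεy⟩ := max_lt_iff.1 hy
      exact ⟨next γ y, (hnext γ y).2 (hγ.trans hlt) ((hg y).trans (hgy.trans hlt)),
        hεy.trans (hnext γ y).1, (hg_ge y γ hγy.le).trans_lt hgy⟩
    refine (hD γ (hγ.trans hlt)).2.2 _ hlt
      (isSuccLimit_of_forall_exists_between hγ.pos fun ε hε => ?_) hbetween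
    obtain ⟨β, -, hβ⟩ := hbetween ε hε
    exact ⟨β, hβ⟩
  · refine (hD γ (hγ.trans hδ)).2.2 δ hδ hlim fun α hα => ?_
    obtain ⟨β, ⟨-, hβD⟩, hβ, hβδ⟩ := h _ (max_lt hγ hα)
    obtain ⟨hγβ, hαβ⟩ := max_lt_iff.1 hβ
    exact ⟨β, hβD γ hγβ, hαβ, hβδ⟩

theorem IsStationaryIn.exists_isStationaryIn_le_of_regressive (hc : c.IsRegular) (hc₀ : ℵ₀ < c)
    {S : Set Ordinal.{u}} (hS : IsStationaryIn S c.ord) {f : Ordinal.{u} → Ordinal.{u}}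
    (hf : ∀ δ ∈ S, f δ < δ) : ∃ γ < c.ord, IsStationaryIn {δ ∈ S | f δ ≤ γ} c.ord := by
  by_contra! h
  have hclub : ∀ γ < c.ord, ∃ C, IsClubIn C c.ord ∧ {δ ∈ S | f δ ≤ γ} ∩ C = ∅ := fun γ hγ => by
    simpa [IsStationaryIn, not_nonempty_iff_eq_empty] using h γ hγ
  choose! D hD hSD using hclub
  obtain ⟨δ, hδS, hδc, hδD⟩ := hS _ (isClubIn_diagInter hc hc₀ hD)
  have hfδ := hf δ hδS
  exact (hSD (f δ) (hfδ.trans hδc)).subset ⟨⟨hδS, le_rfl⟩, hδD _ hfδ⟩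

end Stationary

section Homogeneous

variable {α β : Type*} [LinearOrder α]

def IsHomogeneous (d : α → α → β) (X : Set α) (i : β) : Prop :=
  ∀ a ∈ X, ∀ b ∈ X, a < b → d a b = i

theorem IsHomogeneous.insert_of_forall_lt {d : α → α → β} {X : Set α} {i : β} {δ : α}
    (hX : IsHomogeneous d X i) (hδ : ∀ a ∈ X, a < δ ∧ d a δ = i) :
    IsHomogeneous d (insert δ X) i := by
  rintro a (rfl | ha) b (rfl | hb) hab
  · exact hab.false.elim
  · exact ((hδ b hb).1.trans hab).false.elim
  · exact (hδ a ha).2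
  · exact hX a ha b hb hab

theorem IsChain.isHomogeneous_sUnion {d : α → α → β} {c : Set (Set α)} {i : β}
    (hc : IsChain (· ⊆ ·) c) (h : ∀ s ∈ c, IsHomogeneous d s i) :
    IsHomogeneous d (⋃₀ c) i := by
  rintro a ⟨s, hs, ha⟩ b ⟨t, ht, hb⟩ hab
  rcases hc.total hs ht with hst | hts
  · exact h t ht a (hst ha) b hb hab
  · exact h s hs a ha b (hts hb) hab

def IsEndHomogeneous (d : α → α → β) (i : β) (T : Set α) (δ : α) (A : Set α) : Prop :=
  A ⊆ T ∩ Iio δ ∧ IsHomogeneous d A i ∧ ∀ a ∈ A, d a δ = i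

theorem exists_maximal_isEndHomogeneous (d : α → α → β) (i : β) (T : Set α) (δ : α) :
    ∃ A, Maximal (IsEndHomogeneous d i T δ) A :=
  zorn_subset _ fun c hcE hc => ⟨⋃₀ c,
    ⟨sUnion_subset fun _ hs => (hcE hs).1, hc.isHomogeneous_sUnion fun _ hs => (hcE hs).2.1,
      fun _ ⟨_, hs, ha⟩ => (hcE hs).2.2 _ ha⟩,
    fun _ => subset_sUnion_of_mem⟩

theorem IsEndHomogeneous.apply_ne_of_maximal {d : α → α → β} {i : β} {T A : Set α} {δ δ' : α}
    (hA : IsEndHomogeneous d i T δ A) (hA' : Maximal (IsEndHomogeneous d i T δ') A)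
    (hδT : δ ∈ T) (hδδ' : δ < δ') : d δ δ' ≠ i := by
  intro hi
  have hins : IsEndHomogeneous d i T δ' (insert δ A) :=
    ⟨insert_subset ⟨hδT, hδδ'⟩ hA'.1.1,
      hA.2.1.insert_of_forall_lt fun a ha => ⟨(hA.1 ha).2, hA.2.2 a ha⟩,
      forall_mem_insert.2 ⟨hi, hA'.1.2.2⟩⟩
  exact (hA.1 (hA'.2 hins (subset_insert δ A) (mem_insert δ A))).2.false

end Homogeneous

theorem exists_isStationaryIn_isHomogeneous_zero (hCH : continuum.{u + 1} = ℵ₁)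
    {T : Set Ordinal.{u}} (hT : T ⊆ Somega2omega1) (hTstat : IsStationaryIn T omega2)
    {d : Ordinal.{u} → Ordinal.{u} → Fin 2}
    (hd : ∀ X ⊆ T, IsHomogeneous d X 1 → X.Countable) :
    ∃ S ⊆ T, IsStationaryIn S omega2 ∧ IsHomogeneous d S 0 := by
  choose A hA using exists_maximal_isEndHomogeneous d 1 T
  have hA_countable : ∀ δ, (A δ).Countable := fun δ =>
    hd _ (fun _ hx => ((hA δ).1.1 hx).1) (hA δ).1.2.1
  have hA_bdd : ∀ δ ∈ T, sSup (A δ) < δ := fun δ hδ =>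
    sSup_lt_of_countable (hA_countable δ) (by rw [(hT hδ).2]; exact aleph0_lt_aleph_one)
      fun _ hx => ((hA δ).1.1 hx).2
  obtain ⟨γ, hγ, hS₁⟩ := hTstat.exists_isStationaryIn_le_of_regressive isRegular_aleph_two
    (aleph0_lt_aleph.2 two_pos) hA_bdd
  have hA_Iic : ∀ δ ∈ {δ ∈ T | sSup (A δ) ≤ γ}, A δ ⊆ Iic γ := fun δ hδ x hx =>
    (le_csSup ⟨δ, fun _ hy => ((hA δ).1.1 hy).2.le⟩ hx).trans hδ.2
  have hcof : (ℵ_ 2 : Cardinal.{u}).ord.cof = ℵ_ 2 := isRegular_aleph_two.cof_ord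
  have hcard : #(A '' {δ ∈ T | sSup (A δ) ≤ γ}) ≤ ℵ₁ := by
    refine (mk_le_mk_of_subset ?_).trans (mk_countable_subsets_Iic_le hCH hγ)
    rintro _ ⟨δ, hδ, rfl⟩
    exact ⟨hA_Iic δ hδ, (hA_countable δ).le_aleph0⟩
  obtain ⟨B, hB⟩ := hS₁.exists_isStationaryIn_fiber (by rw [hcof]; exact aleph0_lt_aleph.2 two_pos) A (by
    rw [hcof]
    simpa using hcard.trans_lt (aleph_lt_aleph.2 one_lt_two))
  refine ⟨_, fun δ hδ => hδ.1.1, hB, fun δ hδ δ' hδ' hδδ' => ?_⟩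
  have hne := (hA δ).1.apply_ne_of_maximal (hδ'.2.trans hδ.2.symm ▸ hA δ') hδ.1.1 hδδ'
  omega

/-- Assume CH and let `T ⊆ S^{ω₂}_{ω₁}` be stationary in `ω₂`.
Then `T → (ω₂-stationary, ω₁)²`: for every 2-coloring `d` of pairs from `T`, either there
is a subset of `T` of order type `ω₁` (given as the image of a strictly monotone map on
`ω₁` with values in `T`) on whose pairs `d` is constantly `1`, or there is a stationary
subset of `T` on whose pairs `d` is constantly `0`. -/
theorem stmt1
    (hCH : (2 : Cardinal) ^ Cardinal.aleph 0 = Cardinal.aleph 1)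
    (T : Set Ordinal)
    (hT : T ⊆ Somega2omega1)
    (hTstat : IsStationaryIn T omega2)
    (d : Ordinal → Ordinal → Fin 2) :
    (∃ f : Ordinal → Ordinal,
      StrictMonoOn f (Set.Iio omega1) ∧
      (∀ i < omega1, f i ∈ T) ∧
      (∀ i < omega1, ∀ j < omega1, i < j → d (f i) (f j) = 1)) ∨
    (∃ S : Set Ordinal,
      S ⊆ T ∧
      IsStationaryIn S omega2 ∧
      (∀ α ∈ S, ∀ β ∈ S, α < β → d α β = 0)) := by
  refine or_iff_not_imp_left.2 fun hno => ?_
  refine exists_isStationaryIn_isHomogeneous_zero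
    (continuum_eq_aleph_one_of_univ (by simpa using hCH)) hT hTstat
    fun X hXT hX => not_not.1 fun hXc => hno ?_
  obtain ⟨f, hf, hfX⟩ := exists_strictMonoOn_Iio_ord (c := ℵ₁) (X := X)
    (by simpa using not_le.1 (mt le_aleph0_iff_set_countable.1 hXc))
  exact ⟨f, hf, fun i hi => hXT (hfX i hi),
    fun i hi j hj hij => hX _ (hfX i hi) _ (hfX j hj) (hf hi hj hij)⟩
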